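/- (Optimistic second-order general formula.) For any general source X, any R ≥ 0, and any ε, δ ∈ [0,1) satisfying ε + δ < 1, it holds that L*(ε,δ,R|X) = G*_{ε,δ}(R|X). -/

import Mathlib

/-!
Both infima are taken over sets of thresholds that shift into each other: for every `t > 0`,
an optimistically achievable `L` puts `L + t` in the set defining `G*`, and conversely, so the
infima coincide.

Converse: let `A` be the set on which a code decodes correctly, so `P(A) ≥ 1 - ε - ν`. The points
of `A` with `-log (P(x) / P(A)) ≥ nR + √n (L + t)` whose codeword has length at most `nR + √n L`
have distinct codewords, so there are at most `K ^ (nR + √n L + 1)` of them, each of probability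
at most `K ^ -(nR + √n (L + t))`. Apart from the overflow event they carry mass at most
`K ^ (1 - √n t) → 0`.

Achievability: for a nearly optimal `A` and `θ = nR + √n L`, the points of `A` with
`P(x) > P(A) K ^ (-θ)` are at most `K ^ θ` many and get distinct codewords of length `⌊θ⌋ + 1`;
all points outside `A` get one junk word of that length, and the remaining points of `A` get
distinct longer codewords. Errors then occur only off `A`, and overflow only on
`A ∩ {P(x) ≤ P(A) K ^ (-θ)}`.
-/

open Filter MeasureTheory

namespace NY

/-- A probability distribution on a set, given by its point mass function. -/
structure Dist (α : Type*) where
  p : α → ℝ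
  nonneg : ∀ x, 0 ≤ p x
  hasSum : HasSum p 1

/-- The probability of a set under a distribution. -/
noncomputable def Dist.pr {α : Type*} (P : Dist α) (A : Set α) : ℝ := ∑' x : A, P.p x.1

/-- 𝒰* : nonempty finite strings over the code alphabet 𝒰 = {1,…,K}. -/
abbrev Word (K : ℕ) := {u : List (Fin K) // u ≠ []}

/-- Length of a string, as a real number. -/
noncomputable def wlen {K : ℕ} (u : Word K) : ℝ := u.1.length

/-- Error probability of a variable-length code (φ, ψ). -/
noncomputable def errP {α : Type*} {K : ℕ} (P : Dist α) (φ : α → Word K) (ψ : Word K → α) : ℝ :=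
  P.pr {x | ψ (φ x) ≠ x}

/-- Overflow probability of an encoder φ with threshold η. -/
noncomputable def ovP {α : Type*} {K : ℕ} (P : Dist α) (φ : α → Word K) (η : ℝ) : ℝ :=
  P.pr {x | wlen (φ x) > η}

/-- A general source: for each blocklength n, a distribution on 𝒳^n. -/
abbrev Source (𝒳 : Type*) := (n : ℕ) → Dist (Fin n → 𝒳)

/-- The limit as ν ↓ 0 of a function g which is nonincreasing in ν
(the limit exists by monotonicity and equals the supremum over ν > 0). -/
noncomputable def limNu (g : ℝ → ℝ) : ℝ := sSup (g '' Set.Ioi (0 : ℝ))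

variable {𝒳 : Type*}

/-- A rate R ≥ 0 is (ε,δ)-achievable. -/
def FirstAch (K : ℕ) (X : Source 𝒳) (ε δ R : ℝ) : Prop :=
  0 ≤ R ∧ ∃ (φ : ∀ n, (Fin n → 𝒳) → Word K) (ψ : ∀ n, Word K → (Fin n → 𝒳)),
    limsup (fun n => errP (X n) (φ n) (ψ n)) atTop ≤ ε ∧
    limsup (fun n => ovP (X n) (φ n) ((n : ℝ) * R)) atTop ≤ δ

/-- The first-order (ε,δ)-optimum threshold R(ε,δ|X). -/
noncomputable def Ropt (K : ℕ) (X : Source 𝒳) (ε δ : ℝ) : ℝ :=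
  sInf {R | FirstAch K X ε δ R}

/-- L is (ε,δ,R)-achievable (second order). -/
def SecondAch (K : ℕ) (X : Source 𝒳) (ε δ R L : ℝ) : Prop :=
  ∃ (φ : ∀ n, (Fin n → 𝒳) → Word K) (ψ : ∀ n, Word K → (Fin n → 𝒳)),
    limsup (fun n => errP (X n) (φ n) (ψ n)) atTop ≤ ε ∧
    limsup (fun n => ovP (X n) (φ n) ((n : ℝ) * R + Real.sqrt (n : ℝ) * L)) atTop ≤ δ

/-- The second-order (ε,δ,R)-optimum threshold L(ε,δ,R|X). -/
noncomputable def Lopt (K : ℕ) (X : Source 𝒳) (ε δ R : ℝ) : ℝ :=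
  sInf {L | SecondAch K X ε δ R L}

/-- A rate R ≥ 0 is optimistically (ε,δ)-achievable. -/
def OptFirstAch (K : ℕ) (X : Source 𝒳) (ε δ R : ℝ) : Prop :=
  0 ≤ R ∧ ∃ (φ : ∀ n, (Fin n → 𝒳) → Word K) (ψ : ∀ n, Word K → (Fin n → 𝒳)),
    ∀ γ > (0 : ℝ), ∃ ns : ℕ → ℕ, StrictMono ns ∧ ∀ i,
      errP (X (ns i)) (φ (ns i)) (ψ (ns i)) ≤ ε + γ ∧
      ovP (X (ns i)) (φ (ns i)) ((ns i : ℝ) * R) ≤ δ + γ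

/-- The optimistic first-order (ε,δ)-optimum threshold R*(ε,δ|X). -/
noncomputable def RoptStar (K : ℕ) (X : Source 𝒳) (ε δ : ℝ) : ℝ :=
  sInf {R | OptFirstAch K X ε δ R}

/-- L is optimistically (ε,δ,R)-achievable. -/
def OptSecondAch (K : ℕ) (X : Source 𝒳) (ε δ R L : ℝ) : Prop :=
  ∃ (φ : ∀ n, (Fin n → 𝒳) → Word K) (ψ : ∀ n, Word K → (Fin n → 𝒳)),
    ∀ γ > (0 : ℝ), ∃ ns : ℕ → ℕ, StrictMono ns ∧ ∀ i,
      errP (X (ns i)) (φ (ns i)) (ψ (ns i)) ≤ ε + γ ∧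
      ovP (X (ns i)) (φ (ns i)) ((ns i : ℝ) * R + Real.sqrt (ns i : ℝ) * L) ≤ δ + γ

/-- The optimistic second-order (ε,δ,R)-optimum threshold L*(ε,δ,R|X). -/
noncomputable def LoptStar (K : ℕ) (X : Source 𝒳) (ε δ R : ℝ) : ℝ :=
  sInf {L | OptSecondAch K X ε δ R L}

/-- A rate R ≥ 0 is type I (ε,δ)-achievable. -/
def TypeIAch (K : ℕ) (X : Source 𝒳) (ε δ R : ℝ) : Prop :=
  0 ≤ R ∧ ∃ (φ : ∀ n, (Fin n → 𝒳) → Word K) (ψ : ∀ n, Word K → (Fin n → 𝒳)),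
    limsup (fun n => errP (X n) (φ n) (ψ n)) atTop ≤ ε ∧
    liminf (fun n => ovP (X n) (φ n) ((n : ℝ) * R)) atTop ≤ δ

/-- R†(ε,δ|X). -/
noncomputable def Rdagger (K : ℕ) (X : Source 𝒳) (ε δ : ℝ) : ℝ :=
  sInf {R | TypeIAch K X ε δ R}

/-- A rate R ≥ 0 is type II (ε,δ)-achievable. -/
def TypeIIAch (K : ℕ) (X : Source 𝒳) (ε δ R : ℝ) : Prop :=
  0 ≤ R ∧ ∃ (φ : ∀ n, (Fin n → 𝒳) → Word K) (ψ : ∀ n, Word K → (Fin n → 𝒳)),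
    liminf (fun n => errP (X n) (φ n) (ψ n)) atTop ≤ ε ∧
    limsup (fun n => ovP (X n) (φ n) ((n : ℝ) * R)) atTop ≤ δ

/-- R‡(ε,δ|X). -/
noncomputable def Rddagger (K : ℕ) (X : Source 𝒳) (ε δ : ℝ) : ℝ :=
  sInf {R | TypeIIAch K X ε δ R}

/-- H̄_γ(X) := inf{ R : limsup_n Pr{ (1/n) log(1/P_{X^n}(X^n)) > R } ≤ γ }. -/
noncomputable def Hbar (K : ℕ) (X : Source 𝒳) (γ : ℝ) : ℝ :=
  sInf {R | limsup (fun n =>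
    (X n).pr {x | Real.logb (K : ℝ) (1 / (X n).p x) / (n : ℝ) > R}) atTop ≤ γ}

/-- H̄*_γ(X) (optimistic version, with liminf). -/
noncomputable def HbarStar (K : ℕ) (X : Source 𝒳) (γ : ℝ) : ℝ :=
  sInf {R | liminf (fun n =>
    (X n).pr {x | Real.logb (K : ℝ) (1 / (X n).p x) / (n : ℝ) > R}) atTop ≤ γ}

/-- H̄_γ(R|X) := inf{ L : limsup_n Pr{ (1/n) log(1/P_{X^n}(X^n)) > R + L/√n } ≤ γ }. -/
noncomputable def Hbar2 (K : ℕ) (X : Source 𝒳) (γ R : ℝ) : ℝ :=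
  sInf {L | limsup (fun n =>
    (X n).pr {x | Real.logb (K : ℝ) (1 / (X n).p x) / (n : ℝ)
      > R + L / Real.sqrt (n : ℝ)}) atTop ≤ γ}

/-- H̄*_γ(R|X) (optimistic version, with liminf). -/
noncomputable def Hbar2Star (K : ℕ) (X : Source 𝒳) (γ R : ℝ) : ℝ :=
  sInf {L | liminf (fun n =>
    (X n).pr {x | Real.logb (K : ℝ) (1 / (X n).p x) / (n : ℝ)
      > R + L / Real.sqrt (n : ℝ)}) atTop ≤ γ}

/-- F(ε,R) := limsup_n inf_{A : Pr(A) ≥ 1−ε} Pr{ −(1/n) log P_{X^n}(X^n) ≥ R, X^n ∈ A }. -/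
noncomputable def Fspec (K : ℕ) (X : Source 𝒳) (ε R : ℝ) : ℝ :=
  limsup (fun n =>
    sInf ((fun A : Set (Fin n → 𝒳) =>
        (X n).pr (A ∩ {x | -Real.logb (K : ℝ) ((X n).p x) / (n : ℝ) ≥ R})) ''
      {A | (X n).pr A ≥ 1 - ε})) atTop

/-- H̃_{ε,δ}(X) := inf{ R : F(ε,R) ≤ δ }. -/
noncomputable def Htilde (K : ℕ) (X : Source 𝒳) (ε δ : ℝ) : ℝ :=
  sInf {R | Fspec K X ε R ≤ δ}

/-- G_{ε,δ}(X). -/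
noncomputable def Gfirst (K : ℕ) (X : Source 𝒳) (ε δ : ℝ) : ℝ :=
  sInf {R | limNu (fun ν => limsup (fun n =>
    sInf ((fun A : Set (Fin n → 𝒳) =>
        (X n).pr (A ∩ {x | -Real.logb (K : ℝ) ((X n).p x / (X n).pr A) / (n : ℝ) ≥ R})) ''
      {A | (X n).pr A ≥ 1 - ε - ν})) atTop) ≤ δ}

/-- G*_{ε,δ}(X) (optimistic version, with liminf). -/
noncomputable def GfirstStar (K : ℕ) (X : Source 𝒳) (ε δ : ℝ) : ℝ :=
  sInf {R | limNu (fun ν => liminf (fun n =>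
    sInf ((fun A : Set (Fin n → 𝒳) =>
        (X n).pr (A ∩ {x | -Real.logb (K : ℝ) ((X n).p x / (X n).pr A) / (n : ℝ) ≥ R})) ''
      {A | (X n).pr A ≥ 1 - ε - ν})) atTop) ≤ δ}

/-- G_{ε,δ}(R|X). -/
noncomputable def Gsecond (K : ℕ) (X : Source 𝒳) (ε δ R : ℝ) : ℝ :=
  sInf {L | limNu (fun ν => limsup (fun n =>
    sInf ((fun A : Set (Fin n → 𝒳) =>
        (X n).pr (A ∩ {x | -Real.logb (K : ℝ) ((X n).p x / (X n).pr A) / (n : ℝ)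
          ≥ R + L / Real.sqrt (n : ℝ)})) ''
      {A | (X n).pr A ≥ 1 - ε - ν})) atTop) ≤ δ}

/-- G*_{ε,δ}(R|X) (optimistic version, with liminf). -/
noncomputable def GsecondStar (K : ℕ) (X : Source 𝒳) (ε δ R : ℝ) : ℝ :=
  sInf {L | limNu (fun ν => liminf (fun n =>
    sInf ((fun A : Set (Fin n → 𝒳) =>
        (X n).pr (A ∩ {x | -Real.logb (K : ℝ) ((X n).p x / (X n).pr A) / (n : ℝ)
          ≥ R + L / Real.sqrt (n : ℝ)})) ''
      {A | (X n).pr A ≥ 1 - ε - ν})) atTop) ≤ δ}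

/-- A rate R is optimistically ε-achievable by fixed-length codes. -/
def FixAchR (K : ℕ) (X : Source 𝒳) (ε R : ℝ) : Prop :=
  ∃ (M : ℕ → ℕ) (φ : ∀ n, (Fin n → 𝒳) → Fin (M n)) (ψ : ∀ n, Fin (M n) → (Fin n → 𝒳)),
    ∀ γ > (0 : ℝ), ∃ ns : ℕ → ℕ, StrictMono ns ∧ ∀ i,
      (X (ns i)).pr {x | ψ (ns i) (φ (ns i) x) ≠ x} ≤ ε + γ ∧
      Real.logb (K : ℝ) (M (ns i) : ℝ) / (ns i : ℝ) ≤ R + γ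

/-- R^f(ε|X). -/
noncomputable def Rfix (K : ℕ) (X : Source 𝒳) (ε : ℝ) : ℝ :=
  sInf {R | FixAchR K X ε R}

/-- A real L is optimistically (ε,R)-achievable by fixed-length codes. -/
def FixAchL (K : ℕ) (X : Source 𝒳) (ε R L : ℝ) : Prop :=
  ∃ (M : ℕ → ℕ) (φ : ∀ n, (Fin n → 𝒳) → Fin (M n)) (ψ : ∀ n, Fin (M n) → (Fin n → 𝒳)),
    ∀ γ > (0 : ℝ), ∃ ns : ℕ → ℕ, StrictMono ns ∧ ∀ i,
      (X (ns i)).pr {x | ψ (ns i) (φ (ns i) x) ≠ x} ≤ ε + γ ∧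
      Real.logb (K : ℝ) ((M (ns i) : ℝ) / (K : ℝ) ^ ((ns i : ℝ) * R)) / Real.sqrt (ns i : ℝ)
        ≤ L + γ

/-- L^f(ε,R|X). -/
noncomputable def Lfix (K : ℕ) (X : Source 𝒳) (ε R : ℝ) : ℝ :=
  sInf {L | FixAchL K X ε R L}

lemma ncard_setOf_length_le_lt {K : ℕ} (hK : 2 ≤ K) (M : ℕ) :
    {l : List (Fin K) | l.length ≤ M}.ncard < K ^ (M + 1) := by
  classical
  set F := (Finset.range (M + 1)).biUnion fun i =>
    Finset.univ.image (List.ofFn (n := i) (α := Fin K))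
  have hsub : {l : List (Fin K) | l.length ≤ M} ⊆ F := fun l hl => by
    simp only [F, Finset.coe_biUnion, Finset.coe_range, Finset.coe_image, Finset.coe_univ,
      Set.image_univ, Set.mem_iUnion, Set.mem_Iio, Set.mem_range]
    exact ⟨l.length, Nat.lt_succ_of_le hl, l.get, List.ofFn_get l⟩
  calc {l : List (Fin K) | l.length ≤ M}.ncard ≤ F.card :=
        (Set.ncard_le_ncard hsub F.finite_toSet).trans (Set.ncard_coe_finset F).le
    _ ≤ ∑ i ∈ Finset.range (M + 1), K ^ i := Finset.card_biUnion_le.trans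
        (Finset.sum_le_sum fun i _ => Finset.card_image_le.trans (by simp))
    _ < K ^ (M + 1) := Nat.geomSum_lt hK fun i hi => Finset.mem_range.mp hi

lemma exists_word_injOn {α : Type*} [Countable α] {K : ℕ} (hK : 0 < K) (G : Set α) {S : Set α}
    (hS : S.Finite) {m : ℕ} (hcard : S.ncard ≤ K ^ (m + 1)) :
    ∃ φ : α → Word K, Set.InjOn φ G ∧ ∀ x, x ∉ G \ S → wlen (φ x) = m + 1 := by
  classical
  have : Fintype S := hS.fintype
  obtain ⟨e⟩ : Nonempty (S ↪ (Fin (m + 1) → Fin K)) := Function.Embedding.nonempty_of_card_le (by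
    rwa [Fintype.card_fun, Fintype.card_fin, Fintype.card_fin, ← Nat.card_eq_fintype_card,
      Nat.card_coe_set_eq])
  obtain ⟨ι, hι⟩ := exists_injective_nat α
  let zeros (k : ℕ) : Word K := ⟨List.replicate (k + 1) ⟨0, hK⟩, by simp⟩
  let φ (x : α) : Word K :=
    if hx : x ∈ S then ⟨List.ofFn (e ⟨x, hx⟩), by simp⟩
    else if x ∈ G then zeros (m + 1 + ι x) else zeros m
  have hlen_of_mem : ∀ x (hx : x ∈ S), (φ x).1.length = m + 1 := fun x hx => by simp [φ, hx]
  have hlen_of_notMem : ∀ x ∈ G, x ∉ S → (φ x).1.length = m + 2 + ι x := fun x hxG hx => by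
    simp only [φ, zeros, dif_neg hx, if_pos hxG, List.length_replicate]
    ring
  refine ⟨φ, fun x hx y hy h => ?_, fun x hx => ?_⟩
  · by_cases hxS : x ∈ S <;> by_cases hyS : y ∈ S
    · have h' : List.ofFn (e ⟨x, hxS⟩) = List.ofFn (e ⟨y, hyS⟩) := by
        simpa [φ, hxS, hyS] using congrArg Subtype.val h
      exact congrArg Subtype.val (e.injective (List.ofFn_injective h'))
    · have := congrArg (fun w : Word K => w.1.length) h
      simp only [hlen_of_mem x hxS, hlen_of_notMem y hy hyS] at this
      omega
    · have := congrArg (fun w : Word K => w.1.length) h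
      simp only [hlen_of_mem y hyS, hlen_of_notMem x hx hxS] at this
      omega
    · have := congrArg (fun w : Word K => w.1.length) h
      simp only [hlen_of_notMem y hy hyS, hlen_of_notMem x hx hxS] at this
      exact hι (by omega)
  · by_cases hxS : x ∈ S
    · simp [wlen, hlen_of_mem x hxS]
    · have hxG : x ∉ G := fun hxG => hx ⟨hxG, hxS⟩
      simp [wlen, φ, zeros, hxS, hxG]

namespace Dist

variable {α : Type*} (P : Dist α)

lemma pr_eq_tsum_indicator (A : Set α) : P.pr A = ∑' x, A.indicator P.p x :=
  tsum_subtype A P.p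

lemma summable_indicator (A : Set α) : Summable (A.indicator P.p) :=
  P.hasSum.summable.indicator A

lemma pr_nonneg (A : Set α) : 0 ≤ P.pr A :=
  tsum_nonneg fun x => P.nonneg x

lemma pr_empty : P.pr ∅ = 0 :=
  tsum_empty

lemma pr_mono {A B : Set α} (h : A ⊆ B) : P.pr A ≤ P.pr B := by
  simp only [pr_eq_tsum_indicator]
  exact (P.summable_indicator A).tsum_le_tsum (Set.indicator_le_indicator_of_subset h P.nonneg)
    (P.summable_indicator B)

lemma pr_univ : P.pr Set.univ = 1 := by
  rw [pr_eq_tsum_indicator, Set.indicator_univ, P.hasSum.tsum_eq]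

lemma pr_le_one (A : Set α) : P.pr A ≤ 1 :=
  P.pr_univ ▸ P.pr_mono (Set.subset_univ A)

lemma pr_add_pr_compl (A : Set α) : P.pr A + P.pr Aᶜ = 1 := by
  simp only [pr_eq_tsum_indicator]
  rw [← (P.summable_indicator A).tsum_add (P.summable_indicator Aᶜ)]
  simp only [Set.indicator_self_add_compl_apply]
  exact P.hasSum.tsum_eq

lemma pr_union_le (A B : Set α) : P.pr (A ∪ B) ≤ P.pr A + P.pr B := by
  simp only [pr_eq_tsum_indicator]
  rw [← (P.summable_indicator A).tsum_add (P.summable_indicator B)]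
  refine (P.summable_indicator _).tsum_le_tsum (fun x => ?_)
    ((P.summable_indicator A).add (P.summable_indicator B))
  by_cases hA : x ∈ A <;> by_cases hB : x ∈ B <;> simp [hA, hB, P.nonneg x]

lemma pr_setOf_p_eq_zero : P.pr {x | P.p x = 0} = 0 :=
  (tsum_congr fun x => x.2).trans tsum_zero

lemma pr_mono_of_pos {A B : Set α} (h : ∀ x ∈ A, 0 < P.p x → x ∈ B) : P.pr A ≤ P.pr B := by
  have hsub : A ⊆ B ∪ {x | P.p x = 0} := fun x hx =>
    (P.nonneg x).eq_or_lt.elim (fun h0 => Or.inr h0.symm) (fun hpos => Or.inl (h x hx hpos))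
  calc P.pr A ≤ P.pr B + P.pr {x | P.p x = 0} := (P.pr_mono hsub).trans (P.pr_union_le _ _)
    _ = P.pr B := by rw [pr_setOf_p_eq_zero, add_zero]

lemma p_le_pr {A : Set α} {x : α} (hx : x ∈ A) : P.p x ≤ P.pr A :=
  (P.hasSum.summable.subtype A).le_tsum ⟨x, hx⟩ fun y _ => P.nonneg y.1

protected lemma nonempty (P : Dist α) : Nonempty α := by
  by_contra h
  have : IsEmpty α := not_nonempty_iff.mp h
  exact zero_ne_one (tsum_empty.symm.trans P.hasSum.tsum_eq)

lemma pr_eq_sum {T : Set α} (hT : T.Finite) : P.pr T = ∑ x ∈ hT.toFinset, P.p x := by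
  conv_lhs => rw [← hT.coe_toFinset]
  exact Finset.tsum_subtype hT.toFinset P.p

lemma pr_le_ncard_mul {T : Set α} (hT : T.Finite) {c : ℝ} (hp : ∀ x ∈ T, P.p x ≤ c) :
    P.pr T ≤ T.ncard * c := by
  rw [P.pr_eq_sum hT, Set.ncard_eq_toFinset_card T hT, ← nsmul_eq_mul]
  exact Finset.sum_le_card_nsmul _ _ _ fun x hx => hp x (hT.mem_toFinset.mp hx)

lemma ncard_mul_le_pr {T : Set α} (hT : T.Finite) {c : ℝ} (hp : ∀ x ∈ T, c ≤ P.p x) :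
    T.ncard * c ≤ P.pr T := by
  rw [P.pr_eq_sum hT, Set.ncard_eq_toFinset_card T hT, ← nsmul_eq_mul]
  exact Finset.card_nsmul_le_sum _ _ _ fun x hx => hp x (hT.mem_toFinset.mp hx)

lemma finite_setOf_lt_p {c : ℝ} (hc : 0 < c) : {x | c < P.p x}.Finite := by
  have := P.hasSum.summable.tendsto_cofinite_zero.eventually (ge_mem_nhds hc)
  simpa only [Filter.eventually_cofinite, not_le] using this

lemma pr_le_of_injOn {K : ℕ} (hK : 2 ≤ K) {φ : α → Word K}
    {T : Set α} (hinj : Set.InjOn φ T) {M : ℕ} (hlen : ∀ x ∈ T, (φ x).1.length ≤ M) {c : ℝ}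
    (hc : 0 ≤ c) (hp : ∀ x ∈ T, P.p x ≤ c) : P.pr T ≤ K ^ (M + 1) * c := by
  have hinj' : Set.InjOn (fun x => (φ x).1) T := fun x hx y hy h => hinj hx hy (Subtype.ext h)
  have himage : (fun x => (φ x).1) '' T ⊆ {l | l.length ≤ M} := by
    rintro _ ⟨x, hx, rfl⟩
    exact hlen x hx
  have hfin := (List.finite_length_le (Fin K) M).subset himage
  have hcard : T.ncard < K ^ (M + 1) :=
    hinj'.ncard_image ▸ (Set.ncard_le_ncard himage (List.finite_length_le _ _)).trans_lt
      (ncard_setOf_length_le_lt hK M)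
  calc P.pr T ≤ T.ncard * c := P.pr_le_ncard_mul (hfin.of_finite_image hinj') hp
    _ ≤ K ^ (M + 1) * c := by gcongr; exact_mod_cast hcard.le

lemma pr_decodable_inter_le {K : ℕ} (hK : 2 ≤ K) (φ : α → Word K)
    (ψ : Word K → α) (θ : ℝ) {c : ℝ} (hc : 0 ≤ c) :
    P.pr ({x | ψ (φ x) = x} ∩ {x | P.p x ≤ c}) ≤ ovP P φ θ + (K : ℝ) ^ (θ + 1) * c := by
  set T := {x | ψ (φ x) = x} ∩ {x | P.p x ≤ c} ∩ {x | wlen (φ x) ≤ θ}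
  have hsplit : {x | ψ (φ x) = x} ∩ {x | P.p x ≤ c} ⊆ {x | wlen (φ x) > θ} ∪ T := fun x hx =>
    (lt_or_ge θ (wlen (φ x))).imp id fun h => ⟨hx, h⟩
  have hT : P.pr T ≤ (K : ℝ) ^ (θ + 1) * c := by
    rcases lt_or_ge θ 0 with hθ | hθ
    · have hTe : T = ∅ := Set.eq_empty_of_forall_notMem fun x hx =>
        (hx.2.trans_lt hθ).not_ge (Nat.cast_nonneg _)
      rw [hTe, P.pr_empty]
      positivity
    · have hinj : Set.InjOn φ T := fun x hx y hy h => by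
        rw [← hx.1.1, ← hy.1.1, h]
      calc P.pr T ≤ K ^ (⌊θ⌋₊ + 1) * c := P.pr_le_of_injOn hK hinj
            (fun x hx => Nat.le_floor hx.2) hc fun x hx => hx.1.2
        _ ≤ (K : ℝ) ^ (θ + 1) * c := by
          gcongr
          rw [← Real.rpow_natCast]
          exact Real.rpow_le_rpow_of_exponent_le (by exact_mod_cast (one_le_two.trans hK))
            (by push_cast; linarith [Nat.floor_le hθ])
  calc _ ≤ P.pr ({x | wlen (φ x) > θ} ∪ T) := P.pr_mono hsplit
    _ ≤ ovP P φ θ + (K : ℝ) ^ (θ + 1) * c := (P.pr_union_le _ _).trans (add_le_add le_rfl hT)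

lemma exists_code_errP_le_ovP_le [Countable α] {K : ℕ} (hK : 1 < K) {A : Set α}
    (hA : 0 < P.pr A) {θ : ℝ} (hθ : 0 ≤ θ) :
    ∃ (φ : α → Word K) (ψ : Word K → α), errP P φ ψ ≤ P.pr Aᶜ ∧
      ovP P φ (θ + 1) ≤ P.pr (A ∩ {x | P.p x ≤ P.pr A * (K : ℝ) ^ (-θ)}) := by
  have hKR : (1 : ℝ) < K := by exact_mod_cast hK
  set c := P.pr A * (K : ℝ) ^ (-θ)
  have hc : 0 < c := by positivity
  set S := A ∩ {x | c < P.p x}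
  have hS : S.Finite := (P.finite_setOf_lt_p hc).subset Set.inter_subset_right
  have hcard : S.ncard ≤ K ^ (⌊θ⌋₊ + 1) := by
    have hmass : S.ncard * (P.pr A * (K : ℝ) ^ (-θ)) ≤ P.pr A :=
      (P.ncard_mul_le_pr hS fun x hx => hx.2.le).trans (P.pr_mono Set.inter_subset_left)
    have hKθ : (S.ncard : ℝ) ≤ (K : ℝ) ^ θ := by
      rw [Real.rpow_neg (by positivity)] at hmass
      have : 0 < (K : ℝ) ^ θ := by positivity
      field_simp at hmass
      nlinarith
    have : (K : ℝ) ^ θ < (K : ℝ) ^ (⌊θ⌋₊ + 1) := by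
      rw [← Real.rpow_natCast]
      exact Real.rpow_lt_rpow_of_exponent_lt hKR (by push_cast; exact Nat.lt_floor_add_one θ)
    exact_mod_cast hKθ.trans this.le
  obtain ⟨φ, hinj, hlen⟩ := exists_word_injOn (zero_lt_one.trans hK) A hS hcard
  have := P.nonempty
  refine ⟨φ, Function.invFunOn φ A, P.pr_mono fun x hx hxA => hx (hinj.leftInvOn_invFunOn hxA),
    P.pr_mono fun x hx => ?_⟩
  by_contra hx'
  have hxAS : x ∉ A \ S := fun h =>
    hx' ⟨h.1, (not_lt.mp fun hlt => h.2 ⟨h.1, hlt⟩ : P.p x ≤ c)⟩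
  have : wlen (φ x) ≤ θ + 1 := by
    rw [hlen x hxAS]
    linarith [Nat.floor_le hθ]
  exact (lt_of_lt_of_le hx this).false

end Dist

lemma ovP_antitone {α : Type*} {K : ℕ} (P : Dist α) (φ : α → Word K) : Antitone (ovP P φ) :=
  fun _ _ h => P.pr_mono fun _ hx => lt_of_le_of_lt h hx

lemma errP_eq_one_sub {α : Type*} {K : ℕ} (P : Dist α) (φ : α → Word K) (ψ : Word K → α) :
    errP P φ ψ = 1 - P.pr {x | ψ (φ x) = x} :=
  eq_sub_of_add_eq' (P.pr_add_pr_compl _)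

lemma limNu_le_iff {g : ℝ → ℝ} (hg : BddAbove (g '' Set.Ioi 0)) {δ : ℝ} :
    limNu g ≤ δ ↔ ∀ ν > 0, g ν ≤ δ := by
  rw [limNu, csSup_le_iff hg (Set.nonempty_Ioi.image g), Set.forall_mem_image]
  rfl

section Spectrum

variable (K : ℕ) (X : Source 𝒳)

noncomputable def spectrumSet (R L : ℝ) (n : ℕ) (A : Set (Fin n → 𝒳)) : Set (Fin n → 𝒳) :=
  {x | -Real.logb (K : ℝ) ((X n).p x / (X n).pr A) / (n : ℝ) ≥ R + L / Real.sqrt (n : ℝ)}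

noncomputable def spectrumInf (ε R L ν : ℝ) (n : ℕ) : ℝ :=
  sInf ((fun A => (X n).pr (A ∩ spectrumSet K X R L n A)) '' {A | (X n).pr A ≥ 1 - ε - ν})

variable {K X}

lemma mem_spectrumSet_iff (hK : 1 < K) {R L : ℝ} {n : ℕ} (hn : 0 < n) {A : Set (Fin n → 𝒳)}
    {x : Fin n → 𝒳} (hx : 0 < (X n).p x) (hA : 0 < (X n).pr A) :
    x ∈ spectrumSet K X R L n A ↔
      (X n).p x ≤ (X n).pr A * (K : ℝ) ^ (-(n * R + Real.sqrt n * L)) := by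
  have hn' : (0 : ℝ) < n := by exact_mod_cast hn
  have hthresh : (R + L / Real.sqrt n) * n = n * R + Real.sqrt n * L := by
    rw [add_mul, div_mul_eq_mul_div, mul_div_assoc, Real.div_sqrt]
    ring
  rw [spectrumSet, Set.mem_ofPred_eq, ge_iff_le, le_div_iff₀ hn', hthresh, le_neg,
    Real.logb_le_iff_le_rpow (by exact_mod_cast hK) (div_pos hx hA), div_le_iff₀ hA, mul_comm]

lemma spectrumInf_nonneg (ε R L ν : ℝ) (n : ℕ) : 0 ≤ spectrumInf K X ε R L ν n :=
  Real.sInf_nonneg <| Set.forall_mem_image.mpr fun _ _ => (X n).pr_nonneg _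

lemma spectrumInf_le {ε R L ν : ℝ} {n : ℕ} {A : Set (Fin n → 𝒳)} (hA : 1 - ε - ν ≤ (X n).pr A) :
    spectrumInf K X ε R L ν n ≤ (X n).pr (A ∩ spectrumSet K X R L n A) :=
  csInf_le ⟨0, Set.forall_mem_image.mpr fun _ _ => (X n).pr_nonneg _⟩ ⟨A, hA, rfl⟩

lemma spectrumInf_le_one (ε R L ν : ℝ) (n : ℕ) : spectrumInf K X ε R L ν n ≤ 1 := by
  rcases Set.eq_empty_or_nonempty {A : Set (Fin n → 𝒳) | (X n).pr A ≥ 1 - ε - ν} with h | ⟨A, hA⟩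
  · rw [spectrumInf, h, Set.image_empty, Real.sInf_empty]
    exact zero_le_one
  · exact (spectrumInf_le hA).trans ((X n).pr_le_one _)

lemma exists_lt_of_spectrumInf_lt {ε R L ν a : ℝ} {n : ℕ} (hεν : 0 ≤ ε + ν)
    (h : spectrumInf K X ε R L ν n < a) :
    ∃ A, 1 - ε - ν ≤ (X n).pr A ∧ (X n).pr (A ∩ spectrumSet K X R L n A) < a := by
  have huniv : 1 - ε - ν ≤ (X n).pr Set.univ := by rw [(X n).pr_univ]; linarith
  obtain ⟨_, ⟨A, hA, rfl⟩, hlt⟩ := exists_lt_of_csInf_lt (Set.Nonempty.image _ ⟨Set.univ, huniv⟩) h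
  exact ⟨A, hA, hlt⟩

lemma GsecondStar_eq_sInf (ε δ R : ℝ) : GsecondStar K X ε δ R =
    sInf {L | ∀ ν > 0, liminf (fun n => spectrumInf K X ε R L ν n) atTop ≤ δ} := by
  refine congrArg sInf (Set.ext fun L => limNu_le_iff ⟨1, ?_⟩)
  rintro _ ⟨ν, -, rfl⟩
  exact liminf_le_of_frequently_le (Frequently.of_forall fun n => spectrumInf_le_one ε R L ν n)
    (isBoundedUnder_of ⟨0, fun n => spectrumInf_nonneg ε R L ν n⟩)

end Spectrum

section Blocklength

variable {K : ℕ} {X : Source 𝒳}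

lemma spectrumInf_le_ovP_add (hK : 2 ≤ K) {ε R L t ν : ℝ} {n : ℕ} (hn : 0 < n)
    {φ : (Fin n → 𝒳) → Word K} {ψ : Word K → (Fin n → 𝒳)} (herr : errP (X n) φ ψ ≤ ε + ν) :
    spectrumInf K X ε R (L + t) ν n ≤
      ovP (X n) φ (n * R + Real.sqrt n * L) + (K : ℝ) ^ (1 - Real.sqrt n * t) := by
  set A := {x | ψ (φ x) = x}
  set θ := n * R + Real.sqrt n * L
  have hA : 1 - ε - ν ≤ (X n).pr A := by rw [errP_eq_one_sub] at herr; linarith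
  have hsmall : (X n).pr (A ∩ spectrumSet K X R (L + t) n A) ≤
      (X n).pr (A ∩ {x | (X n).p x ≤ (K : ℝ) ^ (-(θ + Real.sqrt n * t))}) := by
    refine (X n).pr_mono_of_pos fun x ⟨hxA, hxB⟩ hx => ⟨hxA, ?_⟩
    have hApos := hx.trans_le ((X n).p_le_pr hxA)
    rw [mem_spectrumSet_iff hK hn hx hApos] at hxB
    calc (X n).p x ≤ (X n).pr A * (K : ℝ) ^ (-(n * R + Real.sqrt n * (L + t))) := hxB
      _ ≤ (K : ℝ) ^ (-(θ + Real.sqrt n * t)) := by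
        rw [show θ + Real.sqrt n * t = n * R + Real.sqrt n * (L + t) by ring]
        exact mul_le_of_le_one_left (by positivity) ((X n).pr_le_one A)
  calc spectrumInf K X ε R (L + t) ν n ≤ (X n).pr (A ∩ spectrumSet K X R (L + t) n A) :=
        spectrumInf_le hA
    _ ≤ ovP (X n) φ θ + (K : ℝ) ^ (θ + 1) * (K : ℝ) ^ (-(θ + Real.sqrt n * t)) :=
        hsmall.trans ((X n).pr_decodable_inter_le hK φ ψ θ (by positivity))
    _ = ovP (X n) φ θ + (K : ℝ) ^ (1 - Real.sqrt n * t) := by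
        rw [← Real.rpow_add (by positivity)]
        ring_nf

lemma exists_code_of_spectrumInf_lt [Countable 𝒳] (hK : 1 < K) {ε δ R L t ν : ℝ} {n : ℕ}
    (hn : 0 < n) (ht : 1 ≤ Real.sqrt n * t) (hεν : 0 ≤ ε + ν) (hgap : δ + ν ≤ 1 - ε - ν)
    (hlt : spectrumInf K X ε R L ν n < δ + ν) :
    ∃ (φ : (Fin n → 𝒳) → Word K) (ψ : Word K → (Fin n → 𝒳)),
      errP (X n) φ ψ ≤ ε + ν ∧ ovP (X n) φ (n * R + Real.sqrt n * (L + t)) ≤ δ + ν := by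
  obtain ⟨A, hA, hAB⟩ := exists_lt_of_spectrumInf_lt hεν hlt
  have hApos : 0 < (X n).pr A := by
    linarith [(X n).pr_nonneg (A ∩ spectrumSet K X R L n A)]
  set θ := n * R + Real.sqrt n * L
  have hsmall_sub : (X n).pr (A ∩ {x | (X n).p x ≤ (X n).pr A * (K : ℝ) ^ (-θ)}) ≤
      (X n).pr (A ∩ spectrumSet K X R L n A) :=
    (X n).pr_mono_of_pos fun x ⟨hxA, hx⟩ hpos =>
      ⟨hxA, (mem_spectrumSet_iff hK hn hpos hApos).mpr hx⟩
  have hθ : 0 ≤ θ := by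
    by_contra hneg
    have hsub : (X n).pr A ≤ (X n).pr (A ∩ {x | (X n).p x ≤ (X n).pr A * (K : ℝ) ^ (-θ)}) :=
      (X n).pr_mono fun x hxA => ⟨hxA, ((X n).p_le_pr hxA).trans (le_mul_of_one_le_right
        hApos.le (Real.one_le_rpow (by exact_mod_cast hK.le) (by linarith)))⟩
    linarith
  obtain ⟨φ, ψ, herr, hov⟩ := (X n).exists_code_errP_le_ovP_le hK hApos hθ
  refine ⟨φ, ψ, ?_, ?_⟩
  · linarith [(X n).pr_add_pr_compl A]
  · calc ovP (X n) φ (n * R + Real.sqrt n * (L + t)) ≤ ovP (X n) φ (θ + 1) :=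
          ovP_antitone _ φ (by linarith)
      _ ≤ δ + ν := by linarith

end Blocklength

lemma tendsto_sqrt_mul_atTop {t : ℝ} (ht : 0 < t) :
    Tendsto (fun n : ℕ => Real.sqrt n * t) atTop atTop :=
  (Real.tendsto_sqrt_atTop.comp tendsto_natCast_atTop_atTop).atTop_mul_const ht

lemma tendsto_rpow_sub_sqrt_mul {b : ℝ} (hb : 1 < b) (a : ℝ) {t : ℝ} (ht : 0 < t) :
    Tendsto (fun n : ℕ => b ^ (a - Real.sqrt n * t)) atTop (nhds 0) := by
  refine (tendsto_rpow_atBot_of_base_gt_one b hb).comp ?_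
  simpa only [sub_eq_add_neg, Function.comp_def] using
    tendsto_atBot_add_const_left atTop a (tendsto_neg_atTop_atBot.comp (tendsto_sqrt_mul_atTop ht))

section Asymptotic

variable {K : ℕ} {X : Source 𝒳}

lemma liminf_spectrumInf_le_of_optSecondAch (hK : 2 ≤ K) {ε δ R L t ν : ℝ} (ht : 0 < t)
    (hν : 0 < ν) (hach : OptSecondAch K X ε δ R L) :
    liminf (fun n => spectrumInf K X ε R (L + t) ν n) atTop ≤ δ := by
  obtain ⟨φ, ψ, hcode⟩ := hach
  refine le_of_forall_pos_le_add fun c hc => liminf_le_of_frequently_le ?_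
    (isBoundedUnder_of ⟨0, fun n => spectrumInf_nonneg ε R (L + t) ν n⟩)
  obtain ⟨ns, hns, hgood⟩ := hcode (min ν (c / 2)) (by positivity)
  have hev : ∀ᶠ n : ℕ in atTop, 0 < n ∧ (K : ℝ) ^ (1 - Real.sqrt n * t) ≤ c / 2 :=
    (eventually_gt_atTop 0).and ((tendsto_rpow_sub_sqrt_mul (by exact_mod_cast hK) 1 ht).eventually
      (ge_mem_nhds (by positivity)))
  refine hns.tendsto_atTop.frequently ((hns.tendsto_atTop.eventually hev).mono ?_).frequently
  rintro i ⟨hn, htail⟩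
  obtain ⟨herr, hov⟩ := hgood i
  have hγ := min_le_left ν (c / 2)
  have hγ' := min_le_right ν (c / 2)
  calc spectrumInf K X ε R (L + t) ν (ns i)
      ≤ ovP (X (ns i)) (φ (ns i)) (ns i * R + Real.sqrt (ns i) * L) +
          (K : ℝ) ^ (1 - Real.sqrt (ns i) * t) :=
        spectrumInf_le_ovP_add hK hn (herr.trans (by linarith))
    _ ≤ δ + c := by linarith

lemma optSecondAch_of_frequently (hK : 0 < K) {ε δ R L : ℝ}
    (h : ∀ γ > 0, ∃ᶠ n in atTop, ∃ (φ : (Fin n → 𝒳) → Word K) (ψ : Word K → (Fin n → 𝒳)),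
      errP (X n) φ ψ ≤ ε + γ ∧ ovP (X n) φ (n * R + Real.sqrt n * L) ≤ δ + γ) :
    OptSecondAch K X ε δ R L := by
  obtain ⟨ns, hns, hgood⟩ :=
    extraction_forall_of_frequently fun k : ℕ => h (1 / (k + 1)) Nat.one_div_pos_of_nat
  have hcode : ∀ n, ∃ (φ : (Fin n → 𝒳) → Word K) (ψ : Word K → (Fin n → 𝒳)), ∀ k, ns k = n →
      errP (X n) φ ψ ≤ ε + 1 / (k + 1) ∧
        ovP (X n) φ (n * R + Real.sqrt n * L) ≤ δ + 1 / (k + 1) := by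
    intro n
    by_cases hn : ∃ k, ns k = n
    · obtain ⟨k, rfl⟩ := hn
      obtain ⟨φ, ψ, hφψ⟩ := hgood k
      exact ⟨φ, ψ, fun k' hk' => hns.injective hk' ▸ hφψ⟩
    · have := (X n).nonempty
      exact ⟨fun _ => ⟨[⟨0, hK⟩], List.cons_ne_nil _ _⟩, fun _ => Classical.arbitrary _,
        fun k hk => (hn ⟨k, hk⟩).elim⟩
  choose φ ψ hφψ using hcode
  refine ⟨φ, ψ, fun γ hγ => ?_⟩
  obtain ⟨k₀, hk₀⟩ := exists_nat_one_div_lt hγ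
  refine ⟨fun i => ns (k₀ + i), fun i j hij => hns (by omega), fun i => ?_⟩
  have hle : 1 / ((k₀ + i : ℕ) + 1 : ℝ) ≤ 1 / (k₀ + 1) := Nat.one_div_le_one_div (by omega)
  obtain ⟨herr, hov⟩ := hφψ _ (k₀ + i) rfl
  exact ⟨herr.trans (by linarith), hov.trans (by linarith)⟩

lemma optSecondAch_add_of_liminf_spectrumInf_le [Countable 𝒳] (hK : 1 < K) {ε δ R L t : ℝ}
    (hε : 0 ≤ ε) (hεδ : ε + δ < 1) (ht : 0 < t)
    (hG : ∀ ν > 0, liminf (fun n => spectrumInf K X ε R L ν n) atTop ≤ δ) :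
    OptSecondAch K X ε δ R (L + t) := by
  refine optSecondAch_of_frequently (zero_lt_one.trans hK) fun γ hγ => ?_
  set ν := min γ ((1 - ε - δ) / 3)
  have hν : 0 < ν := lt_min hγ (by linarith)
  have hνγ : ν ≤ γ := min_le_left _ _
  have hν3 : ν ≤ (1 - ε - δ) / 3 := min_le_right _ _
  have hfreq : ∃ᶠ n in atTop, spectrumInf K X ε R L ν n < δ + ν :=
    frequently_lt_of_liminf_lt
      (isBoundedUnder_of ⟨1, fun n => spectrumInf_le_one ε R L ν n⟩).isCoboundedUnder_ge
      (by linarith [hG ν hν])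
  refine (hfreq.and_eventually ((eventually_gt_atTop 0).and
    ((tendsto_sqrt_mul_atTop ht).eventually_ge_atTop 1))).mono ?_
  rintro n ⟨hlt, hn, hsqrt⟩
  obtain ⟨φ, ψ, herr, hov⟩ :=
    exists_code_of_spectrumInf_lt hK hn hsqrt (by linarith) (by linarith) hlt
  exact ⟨φ, ψ, herr.trans (by linarith), hov.trans (by linarith)⟩

end Asymptotic

lemma sInf_le_sInf_of_forall_add_mem {S T : Set ℝ} (hST : ∀ L ∈ S, ∀ t > 0, L + t ∈ T)
    (hTS : ∀ L ∈ T, ∀ t > 0, L + t ∈ S) : sInf T ≤ sInf S := by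
  rcases S.eq_empty_or_nonempty with rfl | hS
  · rw [Set.eq_empty_of_forall_notMem fun L hL => hTS L hL 1 one_pos]
  by_cases hSb : BddBelow S
  · obtain ⟨b, hb⟩ := hSb
    have hTb : BddBelow T := ⟨b - 1, fun L hL => by linarith [hb (hTS L hL 1 one_pos)]⟩
    refine le_of_forall_pos_le_add fun t ht => ?_
    have := le_csInf hS fun L hL => sub_le_iff_le_add.mpr (csInf_le hTb (hST L hL t ht))
    linarith
  · have hTb : ¬BddBelow T := fun ⟨b, hb⟩ =>
      hSb ⟨b - 1, fun L hL => by linarith [hb (hST L hL 1 one_pos)]⟩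
    rw [Real.sInf_of_not_bddBelow hSb, Real.sInf_of_not_bddBelow hTb]

theorem statement15_general {𝒳 : Type*} [Countable 𝒳] (K : ℕ) (hK : 2 ≤ K) (X : Source 𝒳)
    (R ε δ : ℝ)
    (hε0 : 0 ≤ ε) (hεδ : ε + δ < 1) :
    LoptStar K X ε δ R = GsecondStar K X ε δ R := by
  have hconv : ∀ L ∈ {L | OptSecondAch K X ε δ R L}, ∀ t > 0,
      L + t ∈ {L | ∀ ν > 0, liminf (fun n => spectrumInf K X ε R L ν n) atTop ≤ δ} :=
    fun L hL t ht ν hν => liminf_spectrumInf_le_of_optSecondAch hK ht hν hL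
  have hach : ∀ L ∈ {L | ∀ ν > 0, liminf (fun n => spectrumInf K X ε R L ν n) atTop ≤ δ},
      ∀ t > 0, L + t ∈ {L | OptSecondAch K X ε δ R L} :=
    fun L hL t ht => optSecondAch_add_of_liminf_spectrumInf_le hK hε0 hεδ ht hL
  rw [LoptStar, GsecondStar_eq_sInf]
  exact le_antisymm (sInf_le_sInf_of_forall_add_mem hach hconv)
    (sInf_le_sInf_of_forall_add_mem hconv hach)

/-- optimistic second-order general formula L*(ε,δ,R|X) = G*_{ε,δ}(R|X). -/
theorem statement15 {𝒳 : Type*} [Countable 𝒳] (K : ℕ) (hK : 2 ≤ K) (X : Source 𝒳)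
    (R ε δ : ℝ) (hR : 0 ≤ R)
    (hε0 : 0 ≤ ε) (hε1 : ε < 1) (hδ0 : 0 ≤ δ) (hδ1 : δ < 1) (hεδ : ε + δ < 1) :
    LoptStar K X ε δ R = GsecondStar K X ε δ R :=
  statement15_general K hK X R ε δ hε0 hεδ
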